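/- Let n be an integer and fix real φ, respectively Θ. With q_n(Θ,φ) := sin Θ cos(nφ)·i + sin Θ sin(nφ)·j + cos Θ·k, the following derivative identities hold in the quaternions for all Θ, φ: (1) ∂q_n/∂Θ (Θ,φ) = q_n(Θ,φ)·a(φ) − a(φ)·q_n(Θ,φ), where a(φ) := (1/2)(sin(nφ)·i − cos(nφ)·j); and (2) ∂q_n/∂φ (Θ,φ) = (n/2)·(k·q_n(Θ,φ) − q_n(Θ,φ)·k). (These identities express that the covariant derivative of f·q_n with respect to the Charap–Duff connection equals df·q_n, i.e. that the Charap–Duff SU(2)-connection reduces to a U(1)-connection.) -/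

import Mathlib

/-!
`q_n(Θ, φ)` is the unit vector with polar angle `Θ` and azimuth `nφ`, and on pure quaternions
the commutator `⁅x, y⁆ = x y - y x` is twice the cross product. So both identities say that
moving `Θ` or `φ` rotates `q_n`: about the horizontal axis `-2 a(φ)` at unit speed, resp. about
`k` at speed `n`.
-/

open scoped Quaternion

def qi : ℍ[ℝ] := ⟨0, 1, 0, 0⟩

def qj : ℍ[ℝ] := ⟨0, 0, 1, 0⟩

def qk : ℍ[ℝ] := ⟨0, 0, 0, 1⟩

noncomputable def charapDuffQ (n : ℤ) (Θ φ : ℝ) : ℍ[ℝ] :=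
  (Real.sin Θ * Real.cos (n * φ)) • qi + (Real.sin Θ * Real.sin (n * φ)) • qj
    + Real.cos Θ • qk

noncomputable def charapDuffA (n : ℤ) (φ : ℝ) : ℍ[ℝ] :=
  (2⁻¹ * Real.sin (n * φ)) • qi - (2⁻¹ * Real.cos (n * φ)) • qj

open Real

noncomputable def pureQuat (x y z : ℝ) : ℍ[ℝ] := x • qi + y • qj + z • qk

section pureQuat

variable (x y z : ℝ)

@[simp] lemma pureQuat_re : (pureQuat x y z).re = 0 := by
  simp only [pureQuat, Quaternion.re_add, Quaternion.re_smul, smul_eq_mul]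
  simp [qi, qj, qk]

@[simp] lemma pureQuat_imI : (pureQuat x y z).imI = x := by
  simp only [pureQuat, Quaternion.imI_add, Quaternion.imI_smul, smul_eq_mul]
  simp [qi, qj, qk]

@[simp] lemma pureQuat_imJ : (pureQuat x y z).imJ = y := by
  simp only [pureQuat, Quaternion.imJ_add, Quaternion.imJ_smul, smul_eq_mul]
  simp [qi, qj, qk]

@[simp] lemma pureQuat_imK : (pureQuat x y z).imK = z := by
  simp only [pureQuat, Quaternion.imK_add, Quaternion.imK_smul, smul_eq_mul]
  simp [qi, qj, qk]

lemma qk_eq_pureQuat : qk = pureQuat 0 0 1 := by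
  ext <;> simp [qk]

lemma lie_pureQuat (a b c : ℝ) :
    ⁅pureQuat a b c, pureQuat x y z⁆ =
      pureQuat (2 * (b * z - c * y)) (2 * (c * x - a * z)) (2 * (a * y - b * x)) := by
  rw [Ring.lie_def]
  ext <;>
    simp only [Quaternion.re_sub, Quaternion.imI_sub, Quaternion.imJ_sub, Quaternion.imK_sub,
      Quaternion.re_mul, Quaternion.imI_mul, Quaternion.imJ_mul, Quaternion.imK_mul,
      pureQuat_re, pureQuat_imI, pureQuat_imJ, pureQuat_imK] <;>
    ring

end pureQuat

lemma HasDerivAt.pureQuat {f g h : ℝ → ℝ} {f' g' h' x : ℝ} (hf : HasDerivAt f f' x)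
    (hg : HasDerivAt g g' x) (hh : HasDerivAt h h' x) :
    HasDerivAt (fun t => pureQuat (f t) (g t) (h t)) (pureQuat f' g' h') x :=
  ((hf.smul_const qi).add (hg.smul_const qj)).add (hh.smul_const qk)

section charapDuff

variable (n : ℤ) (Θ φ : ℝ)

lemma charapDuffQ_eq_pureQuat :
    charapDuffQ n Θ φ = pureQuat (sin Θ * cos (n * φ)) (sin Θ * sin (n * φ)) (cos Θ) :=
  rfl

lemma charapDuffA_eq_pureQuat :
    charapDuffA n φ = pureQuat (2⁻¹ * sin (n * φ)) (-(2⁻¹ * cos (n * φ))) 0 := by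
  simp [charapDuffA, pureQuat, sub_eq_add_neg]

lemma lie_charapDuffQ_charapDuffA :
    ⁅charapDuffQ n Θ φ, charapDuffA n φ⁆ =
      pureQuat (cos Θ * cos (n * φ)) (cos Θ * sin (n * φ)) (-sin Θ) := by
  rw [charapDuffQ_eq_pureQuat, charapDuffA_eq_pureQuat, lie_pureQuat]
  congr 1
  · ring
  · ring
  · linear_combination (-sin Θ) * sin_sq_add_cos_sq (n * φ)

lemma smul_lie_qk_charapDuffQ :
    ((n : ℝ) / 2) • ⁅qk, charapDuffQ n Θ φ⁆ =
      pureQuat (-(n * sin Θ * sin (n * φ))) (n * sin Θ * cos (n * φ)) 0 := by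
  rw [charapDuffQ_eq_pureQuat, qk_eq_pureQuat, lie_pureQuat]
  ext <;>
    simp only [Quaternion.re_smul, Quaternion.imI_smul, Quaternion.imJ_smul, Quaternion.imK_smul,
      pureQuat_re, pureQuat_imI, pureQuat_imJ, pureQuat_imK, smul_eq_mul] <;>
    ring

lemma hasDerivAt_charapDuffQ_polar :
    HasDerivAt (fun t => charapDuffQ n t φ)
      (pureQuat (cos Θ * cos (n * φ)) (cos Θ * sin (n * φ)) (-sin Θ)) Θ :=
  .pureQuat ((hasDerivAt_sin Θ).mul_const _) ((hasDerivAt_sin Θ).mul_const _) (hasDerivAt_cos Θ)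

lemma hasDerivAt_charapDuffQ_azimuthal :
    HasDerivAt (fun t => charapDuffQ n Θ t)
      (pureQuat (-(n * sin Θ * sin (n * φ))) (n * sin Θ * cos (n * φ)) 0) φ := by
  have hlin : HasDerivAt (fun t : ℝ => (n : ℝ) * t) n φ := hasDerivAt_const_mul _
  refine (HasDerivAt.pureQuat (hlin.cos.const_mul (sin Θ)) (hlin.sin.const_mul (sin Θ))
    (hasDerivAt_const φ (cos Θ))).congr_deriv ?_
  congr 1 <;> ring

end charapDuff

/-- The derivatives of the Charap–Duff field `q_n` are commutators:
`∂q_n/∂Θ = q_n·a(φ) − a(φ)·q_n` with `a(φ) = (1/2)(sin(nφ)·i − cos(nφ)·j)`, and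
`∂q_n/∂φ = (n/2)·(k·q_n − q_n·k)`.  (Hence the Charap–Duff `SU(2)`-connection reduces
to a `U(1)`-connection: `∇(f·q_n) = df·q_n`.) -/
theorem charap_duff_field_deriv (n : ℤ) (Θ φ : ℝ) :
    HasDerivAt (fun t : ℝ => charapDuffQ n t φ)
      (charapDuffQ n Θ φ * charapDuffA n φ - charapDuffA n φ * charapDuffQ n Θ φ) Θ ∧
    HasDerivAt (fun t : ℝ => charapDuffQ n Θ t)
      (((n : ℝ) / 2) • (qk * charapDuffQ n Θ φ - charapDuffQ n Θ φ * qk)) φ := by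
  simp only [← Ring.lie_def, lie_charapDuffQ_charapDuffA, smul_lie_qk_charapDuffQ]
  exact ⟨hasDerivAt_charapDuffQ_polar n Θ φ, hasDerivAt_charapDuffQ_azimuthal n Θ φ⟩
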